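/- arXiv:2005.12773 — 2 statements merged into one kernel-verified Lean document; each statement's English description precedes it below -/
import Mathlib

section
/- Let X be a Banach space, T ∈ L(X), and suppose A ⊆ B_X satisfies that the closed convex hull of A equals B_X, and B ⊆ B_{X*} satisfies that the weak* closed convex hull of B equals B_{X*}. Then v(T) = inf over δ > 0 of sup{ |x*(Tx)| : x ∈ A, x* ∈ B, Re x*(x) > 1 − δ }. -/
open Metric Set

/-- The numerical radius of a bounded linear operator `T` on a normed space `X` over `𝕜`:
`v(T) = sup { ‖x*(Tx)‖ : x ∈ S_X, x* ∈ S_{X*}, x*(x) = 1 }`. -/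
noncomputable def numRadius (𝕜 : Type*) [RCLike 𝕜] {X : Type*} [NormedAddCommGroup X]
    [NormedSpace 𝕜 X] (T : X →L[𝕜] X) : ℝ :=
  sSup {r : ℝ | ∃ (x : X) (f : X →L[𝕜] 𝕜), ‖x‖ = 1 ∧ ‖f‖ = 1 ∧ f x = 1 ∧ r = ‖f (T x)‖}

/-- The numerical index of a normed space: `n(X) = inf { v(T) : T ∈ L(X), ‖T‖ = 1 }`. -/
noncomputable def numIndex (𝕜 : Type*) [RCLike 𝕜] (X : Type*) [NormedAddCommGroup X]
    [NormedSpace 𝕜 X] : ℝ :=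
  sInf {r : ℝ | ∃ T : X →L[𝕜] X, ‖T‖ = 1 ∧ r = numRadius 𝕜 T}

/-- `v_δ(T)` computed with points taken in `A ⊆ B_X` and functionals in `B ⊆ B_{X*}`. -/
noncomputable def numRadiusDeltaOn (𝕜 : Type*) [RCLike 𝕜] {X : Type*} [NormedAddCommGroup X]
    [NormedSpace 𝕜 X] (T : X →L[𝕜] X) (A : Set X) (B : Set (X →L[𝕜] 𝕜)) (δ : ℝ) : ℝ :=
  sSup {r : ℝ | ∃ x ∈ A, ∃ f ∈ B, 1 - δ < RCLike.re (f x) ∧ r = ‖f (T x)‖}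

/-- `Z` (together with the bounded bilinear map `t`) is the projective tensor product
`X ⊗̂_π Y`: it is complete, elementary tensors have norm `‖x‖‖y‖`, and the closed unit
ball of `Z` is the closed convex hull of `B_X ⊗ B_Y`. -/
structure IsProjectiveTensorProduct (𝕜 : Type*) [RCLike 𝕜] {X Y Z : Type*}
    [NormedAddCommGroup X] [NormedSpace 𝕜 X] [NormedAddCommGroup Y] [NormedSpace 𝕜 Y]
    [NormedAddCommGroup Z] [NormedSpace 𝕜 Z] [NormedSpace ℝ Z] [IsScalarTower ℝ 𝕜 Z]
    (t : X →L[𝕜] Y →L[𝕜] Z) : Prop where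
  complete : CompleteSpace Z
  norm_tmul : ∀ x y, ‖t x y‖ = ‖x‖ * ‖y‖
  ball_eq : closedBall (0 : Z) 1 = closure (convexHull ℝ
      {z : Z | ∃ x ∈ closedBall (0 : X) 1, ∃ y ∈ closedBall (0 : Y) 1, z = t x y})

/-- `Z` (together with the bounded bilinear map `t`) is the injective tensor product
`X ⊗̂_ε Y`: it is complete, the span of elementary tensors is dense, and on that span
the norm is the injective tensor norm. -/
structure IsInjectiveTensorProduct (𝕜 : Type*) [RCLike 𝕜] {X Y Z : Type*}
    [NormedAddCommGroup X] [NormedSpace 𝕜 X] [NormedAddCommGroup Y] [NormedSpace 𝕜 Y]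
    [NormedAddCommGroup Z] [NormedSpace 𝕜 Z] (t : X →L[𝕜] Y →L[𝕜] Z) : Prop where
  complete : CompleteSpace Z
  dense_span : Dense (Submodule.span 𝕜 {z : Z | ∃ x y, z = t x y} : Set Z)
  norm_sum : ∀ (n : ℕ) (x : Fin n → X) (y : Fin n → Y),
    ‖∑ i, t (x i) (y i)‖ = sSup {r : ℝ | ∃ (f : X →L[𝕜] 𝕜) (g : Y →L[𝕜] 𝕜),
      ‖f‖ ≤ 1 ∧ ‖g‖ ≤ 1 ∧ r = ‖∑ i, f (x i) * g (y i)‖}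

/-- A slice of a bounded set `A`: `{a ∈ A : Re f(a) > sup Re f(A) - δ}`. -/
def sliceOf (𝕜 : Type*) [RCLike 𝕜] {X : Type*} [NormedAddCommGroup X] [NormedSpace 𝕜 X]
    (A : Set X) (f : X →L[𝕜] 𝕜) (δ : ℝ) : Set X :=
  {a ∈ A | sSup {r : ℝ | ∃ b ∈ A, r = RCLike.re (f b)} - δ < RCLike.re (f a)}

/-- A set `A` is slicely countably determined (SCD) if there is a countable determining
family of slices of `A`: any `B ⊆ A` meeting every slice of the family has
closed convex hull containing `A`. -/
def IsSCD (𝕜 : Type*) [RCLike 𝕜] {X : Type*} [NormedAddCommGroup X] [NormedSpace 𝕜 X]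
    [NormedSpace ℝ X] [IsScalarTower ℝ 𝕜 X] (A : Set X) : Prop :=
  ∃ V : ℕ → Set X, (∀ n, ∃ (f : X →L[𝕜] 𝕜) (δ : ℝ), 0 < δ ∧ V n = sliceOf 𝕜 A f δ) ∧
    ∀ B ⊆ A, (∀ n, (B ∩ V n).Nonempty) → A ⊆ closure (convexHull ℝ B)

/-- The Daugavet property: `‖Id + T‖ = 1 + ‖T‖` for every rank-one operator `T`. -/
def DaugavetProperty (𝕜 : Type*) [RCLike 𝕜] (X : Type*) [NormedAddCommGroup X]
    [NormedSpace 𝕜 X] : Prop :=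
  ∀ T : X →L[𝕜] X, (∃ (f : X →L[𝕜] 𝕜) (x₀ : X), ∀ x, T x = f x • x₀) →
    ‖ContinuousLinearMap.id 𝕜 X + T‖ = 1 + ‖T‖

/-!
`v(T) ≤ v_δ(T)`: for `a ∈ A` and `b ∈ B`,
`‖b (T a)‖ + ‖T‖ / δ * re (b a) ≤ v_δ(T) + ‖T‖ / δ`, since a pair outside the slice
`re (b a) > 1 - δ` contributes at most `‖T‖`, which `‖T‖ / δ * re (b a)` pays for. The left side
is convex and norm-continuous in `a`, convex and weak*-continuous in `b`, so the bound passes from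
`A × B` to `B_X × B_{X*}`; at a state `f x = 1` it reads `‖f (T x)‖ ≤ v_δ(T)`.

`inf_δ v_δ(T) ≤ v(T)`: by the Bishop–Phelps–Bollobás theorem (from Ekeland's variational
principle and a sandwich form of Hahn–Banach), a pair `(x₀, f)` in the unit balls with
`re (f x₀) > 1 - δ` is `O(√δ)`-close to a state `(x, g)`, so `v_δ(T) ≤ v(T) + 4 √δ ‖T‖`.
-/

open Filter Topology RCLike

section Ekeland

variable {E : Type*} [MetricSpace E]

theorem cauchySeq_of_dist_le_sub {u : ℕ → E} {a : ℕ → ℝ}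
    (h : ∀ n, dist (u n) (u (n + 1)) ≤ a n - a (n + 1)) (ha : BddBelow (range a)) :
    CauchySeq u := by
  obtain ⟨m, hm⟩ := ha
  refine cauchySeq_of_summable_dist <|
    summable_of_sum_range_le (c := a 0 - m) (fun _ => dist_nonneg) fun n => ?_
  calc ∑ i ∈ Finset.range n, dist (u i) (u (i + 1))
      ≤ ∑ i ∈ Finset.range n, (a i - a (i + 1)) := Finset.sum_le_sum fun i _ => h i
    _ = a 0 - a n := Finset.sum_range_sub' a n
    _ ≤ a 0 - m := by linarith [hm ⟨n, rfl⟩]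

def ekelandSet (F : E → ℝ) (c : ℝ) (x : E) : Set E :=
  {z | F z + c * dist z x ≤ F x}

variable {F : E → ℝ} {c : ℝ}

theorem self_mem_ekelandSet (x : E) : x ∈ ekelandSet F c x := by
  simp [ekelandSet]

theorem ekelandSet_subset (hc : 0 ≤ c) {x w : E} (hw : w ∈ ekelandSet F c x) :
    ekelandSet F c w ⊆ ekelandSet F c x := fun z hz => by
  change F z + c * dist z x ≤ F x
  change F z + c * dist z w ≤ F w at hz
  change F w + c * dist w x ≤ F x at hw
  linarith [mul_le_mul_of_nonneg_left (dist_triangle z w x) hc]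

theorem isClosed_ekelandSet (hF : LowerSemicontinuous F) (x : E) :
    IsClosed (ekelandSet F c x) :=
  (hF.add (continuous_const.mul (continuous_id.dist continuous_const)).lowerSemicontinuous
    ).isClosed_preimage (F x)

theorem exists_seq_mem_ekelandSet (hF : BddBelow (range F)) (x₀ : E) :
    ∃ u : ℕ → E, u 0 = x₀ ∧ ∀ n, u (n + 1) ∈ ekelandSet F c (u n) ∧
      ∀ z ∈ ekelandSet F c (u n), F (u (n + 1)) ≤ F z + (1 / 2) ^ n := by
  have step (n : ℕ) (x : E) : ∃ x' ∈ ekelandSet F c x,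
      ∀ z ∈ ekelandSet F c x, F x' ≤ F z + (1 / 2) ^ n := by
    obtain ⟨_, ⟨x', hx', rfl⟩, hlt⟩ := Real.lt_sInf_add_pos (s := F '' ekelandSet F c x)
      ⟨F x, x, self_mem_ekelandSet x, rfl⟩ (by positivity : (0 : ℝ) < (1 / 2) ^ n)
    exact ⟨x', hx', fun z hz => hlt.le.trans <| add_le_add_left
      (csInf_le (hF.mono (image_subset_range _ _)) ⟨z, hz, rfl⟩) _⟩
  choose next hnext using step
  exact ⟨fun n => Nat.rec x₀ next n, rfl, fun n => hnext n _⟩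

theorem ekeland_variational_principle [CompleteSpace E] (hF : LowerSemicontinuous F)
    (hFb : BddBelow (range F)) (hc : 0 < c) (x₀ : E) :
    ∃ y, F y + c * dist y x₀ ≤ F x₀ ∧ ∀ z, F y ≤ F z + c * dist z y := by
  obtain ⟨u, rfl, hu⟩ := exists_seq_mem_ekelandSet (c := c) hFb x₀
  have hchain (n m : ℕ) (hnm : n ≤ m) : u m ∈ ekelandSet F c (u n) := by
    induction m, hnm using Nat.le_induction with
    | base => exact self_mem_ekelandSet _
    | succ m _ ih => exact ekelandSet_subset hc.le ih (hu m).1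
  have hcauchy : CauchySeq u := by
    refine cauchySeq_of_dist_le_sub (a := fun n => F (u n) / c) (fun n => ?_) ?_
    · have : F (u (n + 1)) + c * dist (u (n + 1)) (u n) ≤ F (u n) := (hu n).1
      rw [← sub_div, le_div_iff₀ hc, dist_comm]
      linarith
    · obtain ⟨m, hm⟩ := hFb
      exact ⟨m / c, by rintro _ ⟨n, rfl⟩; exact div_le_div_of_nonneg_right (hm ⟨_, rfl⟩) hc.le⟩
  obtain ⟨y, hy⟩ := cauchySeq_tendsto_of_complete hcauchy
  have hy_mem (n : ℕ) : y ∈ ekelandSet F c (u n) :=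
    (isClosed_ekelandSet hF _).mem_of_tendsto hy (eventually_atTop.2 ⟨n, hchain n⟩)
  refine ⟨y, hy_mem 0, fun z => ?_⟩
  by_contra! hz
  have hlim : Tendsto (fun n : ℕ => F z + (1 / 2 : ℝ) ^ n) atTop (𝓝 (F z)) := by
    simpa using tendsto_const_nhds.add
      (tendsto_pow_atTop_nhds_zero_of_lt_one (by norm_num : (0 : ℝ) ≤ 1 / 2) (by norm_num))
  -- `z` lies in every `ekelandSet F c (u n)`, so `F y ≤ F (u (n + 1)) ≤ F z + 2⁻ⁿ`.
  have hyz : F y ≤ F z := ge_of_tendsto' hlim fun n => by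
    have hz_mem := ekelandSet_subset hc.le (hy_mem n) hz.le
    have : F y + c * dist y (u (n + 1)) ≤ F (u (n + 1)) := hy_mem (n + 1)
    linarith [(hu n).2 z hz_mem, mul_nonneg hc.le (dist_nonneg (x := y) (y := u (n + 1)))]
  linarith [mul_nonneg hc.le (dist_nonneg (x := z) (y := y))]

end Ekeland

theorem exists_strongDual_between_concaveOn_convexOn {E : Type*} [TopologicalSpace E]
    [AddCommGroup E] [IsTopologicalAddGroup E] [Module ℝ E] [ContinuousSMul ℝ E]
    {p q : E → ℝ} (hp : ConvexOn ℝ univ p) (hpc : Continuous p) (hq : ConcaveOn ℝ univ q)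
    (hqp : ∀ u, q u ≤ p u) (hp0 : p 0 = 0) (hq0 : q 0 = 0) :
    ∃ h : StrongDual ℝ E, (∀ u, q u ≤ h u) ∧ ∀ u, h u ≤ p u := by
  obtain ⟨Φ, c, hs, ht⟩ := geometric_hahn_banach_open
    (s := {z : E × ℝ | p z.1 < z.2}) (t := {z | z.2 ≤ q z.1})
    (by simpa using hp.convex_strict_epigraph) (isOpen_lt (by fun_prop) continuous_snd)
    (by simpa using hq.convex_hypograph)
    (disjoint_left.2 fun z hs ht => (lt_of_le_of_lt (hqp z.1) hs).not_ge ht)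
  set φ := Φ.comp (ContinuousLinearMap.inl ℝ E ℝ)
  set α := Φ (0, 1)
  have hΦ (u : E) (r : ℝ) : Φ (u, r) = φ u + r * α := by
    rw [show (u, r) = (u, 0) + r • ((0 : E), (1 : ℝ)) by simp, map_add, map_smul, smul_eq_mul]
    rfl
  have hαc : α < c := hs (0, 1) (by simp [hp0])
  have hc : c ≤ 0 := by
    simpa [Prod.mk_zero_zero] using ht (0, 0) (by simp [hq0])
  have hα : 0 < -α := by linarith
  have hup (u : E) : φ u + p u * α ≤ c := le_of_forall_pos_lt_add fun ε hε => by
    have := hs (u, p u + ε / -α) (by change p u < p u + ε / -α; linarith [div_pos hε hα])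
    have hε' : ε / -α * α = -ε := by rw [div_neg, neg_mul, div_mul_cancel₀ ε (by linarith)]
    rw [hΦ, add_mul, hε'] at this
    linarith
  have hc0 : c = 0 := le_antisymm hc (by simpa [hp0] using hup 0)
  have hdown (u : E) : 0 ≤ φ u + q u * α := by
    simpa [hΦ, hc0] using ht (u, q u) (le_refl (q u))
  refine ⟨(-α)⁻¹ • φ, fun u => ?_, fun u => ?_⟩
  · rw [smul_apply, smul_eq_mul, le_inv_mul_iff₀ hα]
    linarith [hdown u]
  · rw [smul_apply, smul_eq_mul, inv_mul_le_iff₀ hα]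
    linarith [hup u]

section NormingFunctional

variable {E : Type*} [NormedAddCommGroup E] [NormedSpace ℝ E] {h : StrongDual ℝ E} {y : E}

theorem StrongDual.norm_le_one_of_le_norm_add_sub_norm (hh : ∀ u, h u ≤ ‖y + u‖ - ‖y‖) :
    ‖h‖ ≤ 1 :=
  h.opNorm_le_bound zero_le_one fun u => by
    have h₁ := hh u
    have h₂ := hh (-u)
    rw [map_neg] at h₂
    rw [Real.norm_eq_abs, one_mul, abs_le]
    constructor <;> linarith [norm_add_le y u, norm_add_le y (-u), norm_neg u]

theorem StrongDual.apply_eq_norm_of_le_norm_add_sub_norm (hh : ∀ u, h u ≤ ‖y + u‖ - ‖y‖) :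
    h y = ‖y‖ := by
  have h₂ := hh (-y)
  rw [map_neg, add_neg_cancel, norm_zero] at h₂
  linarith [hh y, norm_add_le y y]

end NormingFunctional

section NumericalRadius

variable {𝕜 X : Type*} [RCLike 𝕜] [NormedAddCommGroup X] [NormedSpace 𝕜 X]

theorem re_apply_le_norm_of_norm_le_one {f : X →L[𝕜] 𝕜} (hf : ‖f‖ ≤ 1) (x : X) :
    re (f x) ≤ ‖x‖ :=
  (re_le_norm _).trans (f.le_of_opNorm_le hf x |>.trans_eq (one_mul _))

theorem norm_apply_apply_le (g : X →L[𝕜] 𝕜) (T : X →L[𝕜] X) (x : X) :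
    ‖g (T x)‖ ≤ ‖g‖ * ‖T‖ * ‖x‖ :=
  (g.le_opNorm _).trans (by rw [mul_assoc]; gcongr; exact T.le_opNorm x)

theorem exists_near_re_sub_le_norm_add_sub_norm [CompleteSpace X] {f : X →L[𝕜] 𝕜} {x₀ : X}
    (hf : ‖f‖ ≤ 1) (hx₀ : ‖x₀‖ ≤ 1) {δ c : ℝ} (hc : 0 < c) (hre : 1 - δ ≤ re (f x₀)) :
    ∃ y, ‖y - x₀‖ ≤ δ / c ∧ ∀ u, re (f u) - c * ‖u‖ ≤ ‖y + u‖ - ‖y‖ := by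
  set F : X → ℝ := fun z => ‖z‖ - re (f z)
  have hF0 (z : X) : 0 ≤ F z := sub_nonneg.2 (re_apply_le_norm_of_norm_le_one hf z)
  obtain ⟨y, hyx₀, hy⟩ := ekeland_variational_principle (F := F)
    (by fun_prop : Continuous F).lowerSemicontinuous ⟨0, by rintro _ ⟨z, rfl⟩; exact hF0 z⟩ hc x₀
  refine ⟨y, ?_, fun u => ?_⟩
  · rw [dist_eq_norm] at hyx₀
    rw [le_div_iff₀ hc]
    linarith [hF0 y]
  · have := hy (y + u)
    simp only [F, dist_eq_norm, add_sub_cancel_left, map_add] at this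
    linarith

theorem numRadius_bddAbove (T : X →L[𝕜] X) :
    BddAbove {r : ℝ | ∃ (x : X) (f : X →L[𝕜] 𝕜), ‖x‖ = 1 ∧ ‖f‖ = 1 ∧ f x = 1 ∧
      r = ‖f (T x)‖} :=
  ⟨‖T‖, by
    rintro _ ⟨x, f, hx, hf, -, rfl⟩
    simpa [hx, hf] using norm_apply_apply_le f T x⟩

theorem numRadius_nonneg (T : X →L[𝕜] X) : 0 ≤ numRadius 𝕜 T :=
  Real.sSup_nonneg (by rintro _ ⟨x, f, -, -, -, rfl⟩; positivity)

theorem numRadiusDeltaOn_bddAbove (T : X →L[𝕜] X) {A : Set X} {B : Set (X →L[𝕜] 𝕜)}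
    (hA : A ⊆ closedBall 0 1) (hB : B ⊆ closedBall 0 1) (δ : ℝ) :
    BddAbove {r : ℝ | ∃ x ∈ A, ∃ f ∈ B, 1 - δ < re (f x) ∧ r = ‖f (T x)‖} :=
  ⟨‖T‖, by
    rintro _ ⟨x, hx, f, hf, -, rfl⟩
    have hx := mem_closedBall_zero_iff.1 (hA hx)
    have hf := mem_closedBall_zero_iff.1 (hB hf)
    calc ‖f (T x)‖ ≤ ‖f‖ * ‖T‖ * ‖x‖ := norm_apply_apply_le f T x
      _ ≤ 1 * ‖T‖ * 1 := by gcongr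
      _ = ‖T‖ := by ring⟩

theorem numRadiusDeltaOn_nonneg (T : X →L[𝕜] X) (A : Set X) (B : Set (X →L[𝕜] 𝕜))
    (δ : ℝ) : 0 ≤ numRadiusDeltaOn 𝕜 T A B δ :=
  Real.sSup_nonneg (by rintro _ ⟨x, -, f, -, -, rfl⟩; positivity)

theorem norm_apply_add_re_le_numRadiusDeltaOn (T : X →L[𝕜] X) {A : Set X}
    {B : Set (X →L[𝕜] 𝕜)} (hA : A ⊆ closedBall 0 1) (hB : B ⊆ closedBall 0 1) {δ : ℝ}
    (hδ : 0 < δ) {a : X} (ha : a ∈ A) {b : X →L[𝕜] 𝕜} (hb : b ∈ B) :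
    ‖b (T a)‖ + ‖T‖ / δ * re (b a) ≤ numRadiusDeltaOn 𝕜 T A B δ + ‖T‖ / δ := by
  have ha1 := mem_closedBall_zero_iff.1 (hA ha)
  have hb1 := mem_closedBall_zero_iff.1 (hB hb)
  have hre : re (b a) ≤ 1 := (re_apply_le_norm_of_norm_le_one hb1 a).trans ha1
  have hTδ : 0 ≤ ‖T‖ / δ := by positivity
  rcases lt_or_ge (1 - δ) (re (b a)) with hgood | hbad
  · have : ‖b (T a)‖ ≤ numRadiusDeltaOn 𝕜 T A B δ :=
      le_csSup (numRadiusDeltaOn_bddAbove T hA hB δ) ⟨a, ha, b, hb, hgood, rfl⟩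
    nlinarith
  · have hTa : ‖b (T a)‖ ≤ ‖T‖ := by
      calc ‖b (T a)‖ ≤ ‖b‖ * ‖T‖ * ‖a‖ := norm_apply_apply_le b T a
        _ ≤ 1 * ‖T‖ * 1 := by gcongr
        _ = ‖T‖ := by ring
    have : ‖T‖ / δ * re (b a) ≤ ‖T‖ / δ - ‖T‖ := by
      calc ‖T‖ / δ * re (b a) ≤ ‖T‖ / δ * (1 - δ) := by gcongr
        _ = ‖T‖ / δ - ‖T‖ := by field_simp
    linarith [numRadiusDeltaOn_nonneg T A B δ]

theorem convex_setOf_norm_add_mul_re_le {E : Type*} [AddCommGroup E] [Module 𝕜 E] [Module ℝ E]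
    [IsScalarTower ℝ 𝕜 E] (L M : E →ₗ[𝕜] 𝕜) (c C : ℝ) :
    Convex ℝ {e | ‖L e‖ + c * re (M e) ≤ C} := by
  simpa using (((convexOn_norm convex_univ).comp_linearMap (L.restrictScalars ℝ)).add
    ((c • reLm.comp (M.restrictScalars ℝ)).convexOn convex_univ)).convex_le C

theorem norm_apply_add_mul_re_le_of_mem_closure_toWeakDual_convexHull
    [NormedSpace ℝ (X →L[𝕜] 𝕜)] [IsScalarTower ℝ 𝕜 (X →L[𝕜] 𝕜)] {B : Set (X →L[𝕜] 𝕜)}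
    (w v : X) {c C : ℝ} (h : ∀ b ∈ B, ‖b w‖ + c * re (b v) ≤ C) {f : X →L[𝕜] 𝕜}
    (hf : StrongDual.toWeakDual f ∈ closure (StrongDual.toWeakDual '' convexHull ℝ B)) :
    ‖f w‖ + c * re (f v) ≤ C := by
  have hconv := convexHull_min h <| convex_setOf_norm_add_mul_re_le
    (ContinuousLinearMap.apply 𝕜 𝕜 w).toLinearMap (ContinuousLinearMap.apply 𝕜 𝕜 v) c C
  refine closure_minimal (t := {φ : WeakDual 𝕜 X | ‖φ w‖ + c * re (φ v) ≤ C}) ?_ ?_ hf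
  · rintro _ ⟨g, hg, rfl⟩
    exact hconv hg
  · exact isClosed_le (((WeakDual.eval_continuous w).norm).add
      (continuous_const.mul (continuous_re.comp (WeakDual.eval_continuous v)))) continuous_const

variable [NormedSpace ℝ X] [IsScalarTower ℝ 𝕜 X]

theorem exists_strongDual_re_apply_eq_norm_of_re_sub_le {f : X →L[𝕜] 𝕜} {y : X} {c : ℝ}
    (hc : 0 ≤ c) (hf : ∀ u, re (f u) - c * ‖u‖ ≤ ‖y + u‖ - ‖y‖) :
    ∃ g : X →L[𝕜] 𝕜, ‖g‖ ≤ 1 ∧ re (g y) = ‖y‖ ∧ ‖g - f‖ ≤ c := by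
  obtain ⟨h, hqh, hhp⟩ := exists_strongDual_between_concaveOn_convexOn
    (p := fun u => ‖y + u‖ - ‖y‖) (q := fun u => re (f u) - c * ‖u‖)
    (((convexOn_norm convex_univ).translate_right y).sub (concaveOn_const _ convex_univ))
    (by fun_prop)
    ((((reLm.comp (f.toLinearMap.restrictScalars ℝ)).concaveOn convex_univ)).sub
      ((convexOn_norm convex_univ).smul hc))
    hf (by simp) (by simp)
  set e := StrongDual.extendRCLikeₗᵢ (𝕜 := 𝕜) (F := X)
  refine ⟨e h, ?_, ?_, ?_⟩
  · rw [e.norm_map]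
    exact StrongDual.norm_le_one_of_le_norm_add_sub_norm hhp
  · rw [StrongDual.extendRCLikeₗᵢ_apply, StrongDual.re_extendRCLike_apply]
    exact StrongDual.apply_eq_norm_of_le_norm_add_sub_norm hhp
  -- `e` is isometric and `e.symm f = re ∘ f`, so `‖e h - f‖ = ‖h - re ∘ f‖`.
  rw [← e.apply_symm_apply f, ← map_sub, e.norm_map]
  refine ContinuousLinearMap.opNorm_le_bound _ hc fun u => ?_
  have h₁ := hqh u
  have h₂ := hqh (-u)
  have he : e.symm f u = re (f u) := rfl
  simp only [map_neg, norm_neg] at h₂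
  rw [sub_apply, he, Real.norm_eq_abs, abs_le]
  constructor <;> linarith

theorem bishop_phelps_bollobas [CompleteSpace X] {f : X →L[𝕜] 𝕜} {x₀ : X}
    (hf : ‖f‖ ≤ 1) (hx₀ : ‖x₀‖ ≤ 1) {δ c : ℝ} (hc : 0 < c) (hδc : δ + δ / c < 1)
    (hre : 1 - δ ≤ re (f x₀)) :
    ∃ (x : X) (g : X →L[𝕜] 𝕜), ‖x‖ = 1 ∧ ‖g‖ = 1 ∧ g x = 1 ∧
      ‖x - x₀‖ ≤ δ + 2 * (δ / c) ∧ ‖g - f‖ ≤ c := by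
  obtain ⟨y, hyx₀, hy⟩ := exists_near_re_sub_le_norm_add_sub_norm hf hx₀ hc hre
  obtain ⟨g, hg, hgy, hgf⟩ := exists_strongDual_re_apply_eq_norm_of_re_sub_le hc.le hy
  have hx₀_norm : 1 - δ ≤ ‖x₀‖ := hre.trans (re_apply_le_norm_of_norm_le_one hf x₀)
  have hy_norm : |1 - ‖y‖| ≤ δ + δ / c := by
    rw [abs_le]
    constructor <;> linarith [norm_sub_norm_le y x₀, norm_sub_norm_le x₀ y, norm_sub_rev y x₀]
  have hy0 : 0 < ‖y‖ := by linarith [abs_le.1 hy_norm]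
  set x : X := (‖y‖⁻¹ : 𝕜) • y
  have hx : ‖x‖ = 1 := norm_smul_inv_norm (norm_pos_iff.1 hy0)
  have hgx_re : re (g x) = 1 := by
    rw [map_smul, smul_eq_mul, ← ofReal_inv, re_ofReal_mul, hgy, inv_mul_cancel₀ hy0.ne']
  have hgx_norm : ‖g x‖ ≤ 1 := (g.le_of_opNorm_le hg x).trans_eq (by rw [hx, one_mul])
  have hgx : g x = 1 := by
    rw [norm_le_re_iff_eq_norm.1 (hgx_norm.trans_eq hgx_re.symm),
      le_antisymm hgx_norm (hgx_re ▸ re_le_norm (g x)), ofReal_one]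
  have hxy : ‖x - y‖ = |1 - ‖y‖| := by
    have h₁ : x - y = ((‖y‖⁻¹ - 1 : ℝ) : 𝕜) • y := by simp [x, sub_smul]
    have h₂ : (‖y‖⁻¹ - 1) * ‖y‖ = 1 - ‖y‖ := by field_simp
    rw [h₁, norm_smul, norm_ofReal, ← h₂, abs_mul, abs_norm]
  refine ⟨x, g, hx, le_antisymm hg ?_, hgx, ?_, hgf⟩
  · simpa [hgx, hx] using g.le_opNorm x
  · linarith [norm_sub_le_norm_sub_add_norm_sub x y x₀]

theorem norm_apply_le_numRadius_add [CompleteSpace X] (T : X →L[𝕜] X) {x₀ : X}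
    {f : X →L[𝕜] 𝕜} (hx₀ : ‖x₀‖ ≤ 1) (hf : ‖f‖ ≤ 1) {δ : ℝ} (hδ : 0 < δ) (hδ' : δ < 1 / 4)
    (hre : 1 - δ < re (f x₀)) :
    ‖f (T x₀)‖ ≤ numRadius 𝕜 T + 4 * √δ * ‖T‖ := by
  have hs : 0 < √δ := Real.sqrt_pos.2 hδ
  have hs' : √δ < 1 / 2 := (Real.sqrt_lt' (by norm_num)).2 (by linarith)
  have hδs : δ = √δ * √δ := (Real.mul_self_sqrt hδ.le).symm
  obtain ⟨x, g, hx, hg, hgx, hxx₀, hgf⟩ := bishop_phelps_bollobas hf hx₀ hs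
    (by rw [Real.div_sqrt]; nlinarith) hre.le
  rw [Real.div_sqrt] at hxx₀
  have hv : ‖g (T x)‖ ≤ numRadius 𝕜 T :=
    le_csSup (numRadius_bddAbove T) ⟨x, g, hx, hg, hgx, rfl⟩
  have hsplit : f (T x₀) = g (T x) + (f - g) (T x₀) + g (T (x₀ - x)) := by
    simp only [sub_apply, map_sub]
    abel
  calc ‖f (T x₀)‖ ≤ ‖g (T x)‖ + ‖f - g‖ * ‖T‖ * ‖x₀‖ + ‖g‖ * ‖T‖ * ‖x₀ - x‖ := by
        rw [hsplit]
        exact (norm_add₃_le ..).trans (by gcongr <;> exact norm_apply_apply_le _ T _)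
    _ ≤ numRadius 𝕜 T + √δ * ‖T‖ * 1 + 1 * ‖T‖ * (δ + 2 * √δ) := by
        rw [norm_sub_rev f, hg, norm_sub_rev x₀]
        gcongr
    _ ≤ numRadius 𝕜 T + 4 * √δ * ‖T‖ := by
        have hδ_le : δ ≤ √δ := by nlinarith
        nlinarith [mul_le_mul_of_nonneg_right hδ_le (norm_nonneg T)]

theorem numRadiusDeltaOn_le_numRadius_add [CompleteSpace X] (T : X →L[𝕜] X) {A : Set X}
    {B : Set (X →L[𝕜] 𝕜)} (hA : A ⊆ closedBall 0 1) (hB : B ⊆ closedBall 0 1) {δ : ℝ}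
    (hδ : 0 < δ) (hδ' : δ < 1 / 4) :
    numRadiusDeltaOn 𝕜 T A B δ ≤ numRadius 𝕜 T + 4 * √δ * ‖T‖ :=
  Real.sSup_le (fun _ ⟨_, hx, _, hf, hre, hr⟩ => hr ▸ norm_apply_le_numRadius_add T
      (mem_closedBall_zero_iff.1 (hA hx)) (mem_closedBall_zero_iff.1 (hB hf)) hδ hδ' hre)
    (by have := numRadius_nonneg T; positivity)

theorem norm_apply_add_mul_re_le_of_mem_closure_convexHull {A : Set X} (L M : X →L[𝕜] 𝕜)
    {c C : ℝ} (h : ∀ a ∈ A, ‖L a‖ + c * re (M a) ≤ C) {x : X}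
    (hx : x ∈ closure (convexHull ℝ A)) :
    ‖L x‖ + c * re (M x) ≤ C :=
  closure_minimal (t := {x | ‖L x‖ + c * re (M x) ≤ C})
    (convexHull_min h (convex_setOf_norm_add_mul_re_le (L : X →ₗ[𝕜] 𝕜) M c C))
    (isClosed_le (L.continuous.norm.add (continuous_const.mul (continuous_re.comp M.continuous)))
      continuous_const) hx

theorem numRadius_le_numRadiusDeltaOn [NormedSpace ℝ (X →L[𝕜] 𝕜)]
    [IsScalarTower ℝ 𝕜 (X →L[𝕜] 𝕜)] (T : X →L[𝕜] X) {A : Set X} {B : Set (X →L[𝕜] 𝕜)}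
    (hA : A ⊆ closedBall 0 1) (hAhull : closure (convexHull ℝ A) = closedBall 0 1)
    (hB : B ⊆ closedBall 0 1)
    (hBhull : closure (⇑StrongDual.toWeakDual '' convexHull ℝ B) =
      ⇑StrongDual.toWeakDual '' closedBall 0 1) {δ : ℝ} (hδ : 0 < δ) :
    numRadius 𝕜 T ≤ numRadiusDeltaOn 𝕜 T A B δ := by
  refine Real.sSup_le ?_ (numRadiusDeltaOn_nonneg T A B δ)
  rintro _ ⟨x, f, hx, hf, hfx, rfl⟩
  have hf_mem : StrongDual.toWeakDual f ∈ closure (StrongDual.toWeakDual '' convexHull ℝ B) :=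
    hBhull ▸ mem_image_of_mem _ (mem_closedBall_zero_iff.2 hf.le)
  have hx_mem : x ∈ closure (convexHull ℝ A) := hAhull ▸ mem_closedBall_zero_iff.2 hx.le
  have key := norm_apply_add_mul_re_le_of_mem_closure_convexHull (f.comp T) f
    (fun a ha => norm_apply_add_mul_re_le_of_mem_closure_toWeakDual_convexHull (T a) a
      (fun b hb => norm_apply_add_re_le_numRadiusDeltaOn T hA hB hδ ha hb) hf_mem) hx_mem
  simpa [hfx] using key

end NumericalRadius

/-- If `A ⊆ B_X` has closed convex hull `B_X` and `B ⊆ B_{X*}` has weak*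
closed convex hull `B_{X*}`, then `v(T) = inf_{δ>0} sup{ |x*(Tx)| : x ∈ A, x* ∈ B,
Re x*(x) > 1 - δ }`. -/
theorem numRadius_eq_sInf_numRadiusDeltaOn {𝕜 X : Type*} [RCLike 𝕜] [NormedAddCommGroup X]
    [NormedSpace 𝕜 X] [CompleteSpace X] [NormedSpace ℝ X] [IsScalarTower ℝ 𝕜 X]
    [NormedSpace ℝ (X →L[𝕜] 𝕜)] [IsScalarTower ℝ 𝕜 (X →L[𝕜] 𝕜)]
    (T : X →L[𝕜] X) (A : Set X) (B : Set (X →L[𝕜] 𝕜))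
    (hA : A ⊆ closedBall 0 1) (hAhull : closure (convexHull ℝ A) = closedBall 0 1)
    (hB : B ⊆ closedBall 0 1)
    (hBhull : closure (⇑StrongDual.toWeakDual '' convexHull ℝ B) =
      ⇑StrongDual.toWeakDual '' closedBall 0 1) :
    numRadius 𝕜 T = sInf {r : ℝ | ∃ δ : ℝ, 0 < δ ∧ r = numRadiusDeltaOn 𝕜 T A B δ} := by
  refine le_antisymm (le_csInf ⟨_, 1, one_pos, rfl⟩ ?_) ?_
  · rintro _ ⟨δ, hδ, rfl⟩
    exact numRadius_le_numRadiusDeltaOn T hA hAhull hB hBhull hδ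
  have hlim : Tendsto (fun δ => numRadius 𝕜 T + 4 * √δ * ‖T‖) (𝓝[>] 0) (𝓝 (numRadius 𝕜 T)) := by
    have : Continuous fun δ => numRadius 𝕜 T + 4 * √δ * ‖T‖ := by fun_prop
    simpa using this.continuousWithinAt.tendsto (s := Ioi 0) (x := 0)
  refine ge_of_tendsto hlim (eventually_of_mem (Ioo_mem_nhdsGT (by norm_num : (0 : ℝ) < 1 / 4))
    fun δ hδ => ?_)
  have hbdd : BddBelow {r : ℝ | ∃ δ : ℝ, 0 < δ ∧ r = numRadiusDeltaOn 𝕜 T A B δ} :=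
    ⟨0, by rintro _ ⟨δ, -, rfl⟩; exact numRadiusDeltaOn_nonneg T A B δ⟩
  exact (csInf_le hbdd ⟨δ, hδ.1, rfl⟩).trans (numRadiusDeltaOn_le_numRadius_add T hA hB hδ.1 hδ.2)
end

section
/- If a bounded subset A of a Banach space X is slicely countably determined, then any set C with A ⊆ closure(C) ⊆ closed convex hull of A is also slicely countably determined. -/
open Metric Set

set_option maxHeartbeats 2000000 in
/-- If a bounded set `A` is SCD, then so is every `C` with
`A ⊆ closure C ⊆ closed convex hull of A`. -/
theorem isSCD_of_between {𝕜 X : Type*} [RCLike 𝕜] [NormedAddCommGroup X] [NormedSpace 𝕜 X]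
    [NormedSpace ℝ X] [IsScalarTower ℝ 𝕜 X] (A C : Set X)
    (hbdd : Bornology.IsBounded A) (hA : IsSCD 𝕜 A)
    (h₁ : A ⊆ closure C) (h₂ : closure C ⊆ closure (convexHull ℝ A)) :
    IsSCD 𝕜 C := by
  classical
  obtain ⟨V, hV, hdet⟩ := hA
  choose f δ hδ hVeq using hV
  rcases A.eq_empty_or_nonempty with hAe | ⟨a₁, ha₁⟩
  · -- A empty ⟹ C empty
    have hCe : C = ∅ := by
      have h3 : closure C ⊆ (∅ : Set X) := by
        simpa [hAe] using h₂
      exact Set.eq_empty_of_subset_empty (subset_closure.trans h3)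
    refine ⟨fun _ => sliceOf 𝕜 C 0 1, fun n => ⟨0, 1, one_pos, rfl⟩, ?_⟩
    intro B hB _
    rw [hCe]
    exact Set.empty_subset _
  · -- main case
    have hCne : C.Nonempty := closure_nonempty_iff.1 ⟨a₁, h₁ ha₁⟩
    obtain ⟨c₁, hc₁⟩ := hCne
    have hDbdd : Bornology.IsBounded (closure (convexHull ℝ A)) :=
      (isBounded_convexHull.2 hbdd).closure
    obtain ⟨R, hR⟩ := isBounded_iff_forall_norm_le.1 hDbdd
    have hAsub : A ⊆ closure (convexHull ℝ A) :=
      (subset_convexHull ℝ A).trans subset_closure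
    have hCsub : C ⊆ closure (convexHull ℝ A) := subset_closure.trans h₂
    have hR0 : 0 ≤ R := le_trans (norm_nonneg a₁) (hR a₁ (hAsub ha₁))
    -- real part functionals
    set Φ : (X →L[𝕜] 𝕜) → (X →L[ℝ] ℝ) :=
      fun ψ => (RCLike.reCLM : 𝕜 →L[ℝ] ℝ).comp (ψ.restrictScalars ℝ) with hΦdef
    have hΦ : ∀ (ψ : X →L[𝕜] 𝕜) (x : X), Φ ψ x = RCLike.re (ψ x) := fun ψ x => rfl
    have hsetA : ∀ ψ : X →L[𝕜] 𝕜,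
        {r : ℝ | ∃ b ∈ A, r = RCLike.re (ψ b)} = {r : ℝ | ∃ b ∈ A, r = Φ ψ b} := by
      intro ψ; simp only [hΦ]
    have hsetC : ∀ ψ : X →L[𝕜] 𝕜,
        {r : ℝ | ∃ b ∈ C, r = RCLike.re (ψ b)} = {r : ℝ | ∃ b ∈ C, r = Φ ψ b} := by
      intro ψ; simp only [hΦ]
    have hbddS : ∀ (ψ : X →L[ℝ] ℝ) (S : Set X), S ⊆ closure (convexHull ℝ A) →
        BddAbove {r : ℝ | ∃ b ∈ S, r = ψ b} := by
      intro ψ S hS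
      refine ⟨‖ψ‖ * R, ?_⟩
      rintro r ⟨b, hb, rfl⟩
      calc ψ b ≤ |ψ b| := le_abs_self _
        _ ≤ ‖ψ‖ * ‖b‖ := ψ.le_opNorm b
        _ ≤ ‖ψ‖ * R := mul_le_mul_of_nonneg_left (hR b (hS hb)) (norm_nonneg ψ)
    have hMle : ∀ ψ : X →L[𝕜] 𝕜, ∀ a ∈ A,
        RCLike.re (ψ a) ≤ sSup {r : ℝ | ∃ b ∈ A, r = RCLike.re (ψ b)} := by
      intro ψ a ha
      refine le_csSup ?_ ⟨a, ha, rfl⟩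
      rw [hsetA ψ]
      exact hbddS (Φ ψ) A hAsub
    have hMD : ∀ ψ : X →L[𝕜] 𝕜, ∀ x ∈ closure (convexHull ℝ A),
        RCLike.re (ψ x) ≤ sSup {r : ℝ | ∃ b ∈ A, r = RCLike.re (ψ b)} := by
      intro ψ x hx
      set M := sSup {r : ℝ | ∃ b ∈ A, r = RCLike.re (ψ b)} with hM
      have hconv : convexHull ℝ A ⊆ {y | Φ ψ y ≤ M} := by
        refine convexHull_min (fun a ha => ?_)
          (convex_halfSpace_le (Φ ψ).toLinearMap.isLinear M)
        show Φ ψ a ≤ M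
        rw [hΦ]
        exact hMle ψ a ha
      have hcl : IsClosed {y | Φ ψ y ≤ M} := isClosed_le (Φ ψ).continuous continuous_const
      have := closure_minimal hconv hcl hx
      rw [← hΦ]
      exact this
    have hMCA : ∀ ψ : X →L[𝕜] 𝕜,
        sSup {r : ℝ | ∃ b ∈ C, r = RCLike.re (ψ b)}
          = sSup {r : ℝ | ∃ b ∈ A, r = RCLike.re (ψ b)} := by
      intro ψ
      apply le_antisymm
      · refine csSup_le ⟨RCLike.re (ψ c₁), c₁, hc₁, rfl⟩ ?_
        rintro r ⟨b, hb, rfl⟩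
        exact hMD ψ b (hCsub hb)
      · refine csSup_le ⟨RCLike.re (ψ a₁), a₁, ha₁, rfl⟩ ?_
        rintro r ⟨a, ha, rfl⟩
        set MC := sSup {r : ℝ | ∃ b ∈ C, r = RCLike.re (ψ b)} with hMC
        have hCle : C ⊆ {y | Φ ψ y ≤ MC} := by
          intro c hc
          show Φ ψ c ≤ MC
          rw [hΦ]
          refine le_csSup ?_ ⟨c, hc, rfl⟩
          rw [hsetC ψ]
          exact hbddS (Φ ψ) C hCsub
        have hcl : IsClosed {y | Φ ψ y ≤ MC} := isClosed_le (Φ ψ).continuous continuous_const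
        have := closure_minimal hCle hcl (h₁ ha)
        rw [← hΦ]
        exact this
    -- the candidate determining family for C
    refine ⟨fun m => sliceOf 𝕜 C (f m.unpair.1) (δ m.unpair.1 / 2 ^ m.unpair.2),
      fun m => ⟨f m.unpair.1, δ m.unpair.1 / 2 ^ m.unpair.2,
        by have := hδ m.unpair.1; positivity, rfl⟩, ?_⟩
    intro B hBC hmeet
    set F := closure (convexHull ℝ B) with hFdef
    have hFconv : Convex ℝ F := (convex_convexHull ℝ B).closure
    have hFclosed : IsClosed F := isClosed_closure
    have hAF : A ⊆ F := by
      intro a₀ ha₀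
      by_contra ha₀F
      obtain ⟨g, u, hgu, hua⟩ := geometric_hahn_banach_closed_point hFconv hFclosed ha₀F
      set τ : ℝ := (g a₀ - u) / 2 with hτdef
      have hτ : 0 < τ := by rw [hτdef]; linarith
      set v : ℝ := u + τ with hvdef
      clear_value τ
      set B₀ : Set X := {a ∈ A | g a < v} with hB₀def
      by_cases hcase : ∀ n, (B₀ ∩ V n).Nonempty
      · have hsub : A ⊆ closure (convexHull ℝ B₀) :=
          hdet B₀ (Set.sep_subset _ _) hcase
        have hhalf : A ⊆ {x | g x ≤ v} := by
          refine hsub.trans (closure_minimal (convexHull_min ?_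
            (convex_halfSpace_le g.toLinearMap.isLinear v))
            (isClosed_le g.continuous continuous_const))
          intro a ha
          exact le_of_lt ha.2
        have h4 : g a₀ ≤ v := hhalf ha₀
        rw [hvdef, hτdef] at h4
        linarith
      · push_neg at hcase
        obtain ⟨N, hN⟩ := hcase
        set MA := sSup {r : ℝ | ∃ b ∈ A, r = RCLike.re (f N b)} with hMAdef
        have hbad : ∀ a ∈ A, MA - δ N < RCLike.re (f N a) → v ≤ g a := by
          intro a ha hsl
          by_contra hv
          push_neg at hv
          rw [hMAdef] at hsl
          have hmem : a ∈ B₀ ∩ V N := ⟨⟨ha, hv⟩, by rw [hVeq N]; exact ⟨ha, hsl⟩⟩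
          rw [hN] at hmem
          exact hmem
        -- constants
        set G : ℝ := ‖g‖ * R with hGdef
        have hG0 : 0 ≤ G := mul_nonneg (norm_nonneg g) hR0
        set K : ℝ := 2 * |u| + |g a₀| + G + 1 with hKdef
        have hK : 0 < K := by rw [hKdef]; positivity
        obtain ⟨k, hk⟩ : ∃ k : ℕ, ((1:ℝ)/2) ^ k < τ / (4 * K) :=
          exists_pow_lt_of_lt_one (by positivity) (by norm_num)
        set δ' : ℝ := δ N / 2 ^ k with hδ'def
        have hδN := hδ N
        have hδ'0 : 0 < δ' := by rw [hδ'def]; positivity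
        clear_value v K
        have hδ'lt : δ' < δ N * (τ / (4 * K)) := by
          have hrw : δ N / 2 ^ k = δ N * ((1:ℝ)/2) ^ k := by
            rw [div_pow, one_pow]; ring
          rw [hδ'def, hrw]
          exact mul_lt_mul_of_pos_left hk hδN
        set ψ : X →L[ℝ] ℝ := Φ (f N) with hψdef
        have hψapp : ∀ x, ψ x = RCLike.re (f N x) := fun x => hΦ (f N) x
        have hδ'lt2 : δ' < δ N * (τ / (4 * K)) → True := fun _ => trivial
        set Ef : ℝ := ‖ψ‖ with hEfdef
        set Eg : ℝ := ‖g‖ with hEgdef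
        have hEf0 : 0 ≤ Ef := norm_nonneg _
        have hEg0 : 0 ≤ Eg := norm_nonneg _
        set η : ℝ := min (δ' / (Ef + 1)) (τ / (4 * (Eg + 1))) with hηdef
        have hη0 : 0 < η :=
          lt_min (div_pos hδ'0 (by linarith)) (div_pos hτ (by linarith))
        have hEfη : Ef * η ≤ δ' := by
          have h1 : η ≤ δ' / (Ef + 1) := min_le_left _ _
          calc Ef * η ≤ Ef * (δ' / (Ef + 1)) := mul_le_mul_of_nonneg_left h1 hEf0
            _ ≤ δ' := by
              rw [mul_div_assoc', div_le_iff₀ (by linarith : (0:ℝ) < Ef + 1)]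
              nlinarith [hδ'0.le, hEf0]
        have hEgη : Eg * η ≤ τ / 4 := by
          have h1 : η ≤ τ / (4 * (Eg + 1)) := min_le_right _ _
          calc Eg * η ≤ Eg * (τ / (4 * (Eg + 1))) := mul_le_mul_of_nonneg_left h1 hEg0
            _ = Eg * τ / (4 * (Eg + 1)) := by ring
            _ ≤ τ / 4 := by
              rw [div_le_div_iff₀ (by linarith : (0:ℝ) < 4 * (Eg + 1)) (by norm_num : (0:ℝ) < 4)]
              nlinarith [hτ.le, hEg0]
        clear_value MA δ' Ef Eg η
        -- pick b in the (N, k) slice of C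
        obtain ⟨b, hbB, hbV⟩ := hmeet (Nat.pair N k)
        simp only [Nat.unpair_pair] at hbV
        obtain ⟨hbC, hbsl⟩ := hbV
        rw [hMCA (f N)] at hbsl
        have hbsl' : MA - δ' < ψ b := by
          rw [hψapp, hMAdef, hδ'def]
          exact hbsl
        -- approximate b by a convex combination of points of A
        have hbD : b ∈ closure (convexHull ℝ A) := hCsub hbC
        obtain ⟨c, hcA, hbc⟩ : ∃ c ∈ convexHull ℝ A, dist b c < η := by
          rcases Metric.mem_closure_iff.1 hbD η hη0 with ⟨c, hc, hd⟩
          exact ⟨c, hc, hd⟩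
        have hbcle : ‖b - c‖ ≤ η := by
          rw [← dist_eq_norm]; exact hbc.le
        rw [convexHull_eq] at hcA
        obtain ⟨ι, t, w, z, hw0, hw1, hzA, hcc⟩ := hcA
        have hcsum : c = ∑ i ∈ t, w i • z i := by
          rw [← hcc, Finset.centerMass_eq_of_sum_1 _ _ hw1]
        have hψc : ψ c = ∑ i ∈ t, w i * ψ (z i) := by
          rw [hcsum, map_sum]
          exact Finset.sum_congr rfl fun i _ => by rw [map_smul, smul_eq_mul]
        have hgc : g c = ∑ i ∈ t, w i * g (z i) := by
          rw [hcsum, map_sum]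
          exact Finset.sum_congr rfl fun i _ => by rw [map_smul, smul_eq_mul]
        set P : Finset ι := t.filter (fun i => MA - δ N < ψ (z i)) with hPdef
        set Q : Finset ι := t.filter (fun i => ¬ (MA - δ N < ψ (z i))) with hQdef
        set μ : ℝ := ∑ i ∈ Q, w i with hμdef
        set S : ℝ := ∑ i ∈ P, w i with hSdef
        have hSPQ : S = ∑ i ∈ P, w i := hSdef
        have hμPQ : μ = ∑ i ∈ Q, w i := hμdef
        have hSμ : S + μ = 1 := by
          rw [hSdef, hμdef, hPdef, hQdef, Finset.sum_filter_add_sum_filter_not]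
          exact hw1
        have hμ0 : 0 ≤ μ :=
          Finset.sum_nonneg fun i hi => hw0 i (Finset.mem_of_mem_filter i hi)
        have hS0 : 0 ≤ S :=
          Finset.sum_nonneg fun i hi => hw0 i (Finset.mem_of_mem_filter i hi)
        have hsplitψ : ∑ i ∈ t, w i * ψ (z i)
            = ∑ i ∈ P, w i * ψ (z i) + ∑ i ∈ Q, w i * ψ (z i) := by
          rw [hPdef, hQdef, Finset.sum_filter_add_sum_filter_not]
        have hsplitg : ∑ i ∈ t, w i * g (z i)
            = ∑ i ∈ P, w i * g (z i) + ∑ i ∈ Q, w i * g (z i) := by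
          rw [hPdef, hQdef, Finset.sum_filter_add_sum_filter_not]
        -- upper bound on ψ c
        have hψub : ψ c ≤ MA - μ * δ N := by
          have h1 : ∑ i ∈ P, w i * ψ (z i) ≤ ∑ i ∈ P, w i * MA := by
            refine Finset.sum_le_sum fun i hi => ?_
            have hiA : z i ∈ A := hzA i (Finset.mem_of_mem_filter i hi)
            have hle : ψ (z i) ≤ MA := by
              rw [hψapp, hMAdef]
              exact hMle (f N) (z i) hiA
            exact mul_le_mul_of_nonneg_left hle (hw0 i (Finset.mem_of_mem_filter i hi))
          have h2 : ∑ i ∈ Q, w i * ψ (z i) ≤ ∑ i ∈ Q, w i * (MA - δ N) := by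
            refine Finset.sum_le_sum fun i hi => ?_
            have hile : ψ (z i) ≤ MA - δ N := le_of_not_gt (Finset.mem_filter.1 hi).2
            exact mul_le_mul_of_nonneg_left hile (hw0 i (Finset.mem_of_mem_filter i hi))
          have h3 : ψ c ≤ S * MA + μ * (MA - δ N) := by
            rw [hψc, hsplitψ, hSdef, hμdef, Finset.sum_mul, Finset.sum_mul]
            exact add_le_add h1 h2
          have h4 : S * MA + μ * (MA - δ N) = MA - μ * δ N := by
            have h5 : S = 1 - μ := by linarith
            rw [h5]; ring
          linarith
        -- lower bound on ψ c
        have hψlb : MA - δ' - Ef * η < ψ c := by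
          have h1 : ψ b - ψ c ≤ Ef * η := by
            calc ψ b - ψ c = ψ (b - c) := by rw [map_sub]
              _ ≤ |ψ (b - c)| := le_abs_self _
              _ ≤ Ef * ‖b - c‖ := by rw [hEfdef]; exact ψ.le_opNorm _
              _ ≤ Ef * η := mul_le_mul_of_nonneg_left hbcle hEf0
          linarith
        have hμδ : μ * δ N < 2 * δ' := by linarith
        have hμlt : μ < τ / (2 * K) := by
          have h5 : δ N * μ < δ N * (τ / (2 * K)) := by
            calc δ N * μ = μ * δ N := by ring
              _ < 2 * δ' := hμδ
              _ < 2 * (δ N * (τ / (4 * K))) := by linarith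
              _ = δ N * (τ / (2 * K)) := by ring
          exact (mul_lt_mul_iff_right₀ hδN).1 h5
        -- bounds on g c
        have hgb : g b < u := hgu b (subset_closure (subset_convexHull ℝ B hbB))
        have hgcub : g c < u + τ / 4 := by
          have h1 : g c - g b ≤ Eg * η := by
            calc g c - g b = g (c - b) := by rw [map_sub]
              _ ≤ |g (c - b)| := le_abs_self _
              _ ≤ Eg * ‖c - b‖ := by rw [hEgdef]; exact g.le_opNorm _
              _ ≤ Eg * η := by
                  have h2 : ‖c - b‖ ≤ η := by rw [norm_sub_rev]; exact hbcle
                  exact mul_le_mul_of_nonneg_left h2 hEg0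
          linarith
        have hgclb : S * v + μ * (-G) ≤ g c := by
          have h1 : ∑ i ∈ P, w i * v ≤ ∑ i ∈ P, w i * g (z i) := by
            refine Finset.sum_le_sum fun i hi => ?_
            have hiA : z i ∈ A := hzA i (Finset.mem_of_mem_filter i hi)
            have hge : v ≤ g (z i) := by
              refine hbad (z i) hiA ?_
              have := (Finset.mem_filter.1 hi).2
              rw [← hψapp]
              exact this
            exact mul_le_mul_of_nonneg_left hge (hw0 i (Finset.mem_of_mem_filter i hi))
          have h2 : ∑ i ∈ Q, w i * (-G) ≤ ∑ i ∈ Q, w i * g (z i) := by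
            refine Finset.sum_le_sum fun i hi => ?_
            have hiA : z i ∈ A := hzA i (Finset.mem_of_mem_filter i hi)
            have hge : -G ≤ g (z i) := by
              have habs : |g (z i)| ≤ G := by
                calc |g (z i)| ≤ ‖g‖ * ‖z i‖ := g.le_opNorm _
                  _ ≤ ‖g‖ * R := mul_le_mul_of_nonneg_left (hR _ (hAsub hiA)) (norm_nonneg g)
              linarith [neg_abs_le (g (z i))]
            exact mul_le_mul_of_nonneg_left hge (hw0 i (Finset.mem_of_mem_filter i hi))
          calc S * v + μ * (-G)
              = ∑ i ∈ P, w i * v + ∑ i ∈ Q, w i * (-G) := by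
                rw [hSdef, hμdef, Finset.sum_mul, Finset.sum_mul]
            _ ≤ ∑ i ∈ P, w i * g (z i) + ∑ i ∈ Q, w i * g (z i) := add_le_add h1 h2
            _ = g c := by rw [hgc, hsplitg]
        -- final contradiction
        have hvK : v + G ≤ K := by
          have h1 : u ≤ |u| := le_abs_self u
          have h2 : g a₀ ≤ |g a₀| := le_abs_self _
          have h3 : -u ≤ |u| := neg_le_abs u
          rw [hvdef, hτdef, hKdef]
          linarith
        have hS1 : S = 1 - μ := by linarith
        have h5 : v - μ * (v + G) < u + τ / 4 := by
          have h6 : S * v + μ * (-G) = v - μ * (v + G) := by rw [hS1]; ring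
          linarith
        have h6 : μ * (v + G) ≤ μ * K := mul_le_mul_of_nonneg_left hvK hμ0
        have h7 : μ * K < (τ / (2 * K)) * K := mul_lt_mul_of_pos_right hμlt hK
        have h8 : (τ / (2 * K)) * K = τ / 2 := by
          field_simp
        have h9 : v = u + τ := hvdef
        linarith
    intro x hx
    exact closure_minimal (convexHull_min hAF hFconv) hFclosed (h₂ (subset_closure hx))
end
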